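/- Let Θ : ℝ → (0,∞) be a C¹ even function satisfying lim_{v→±∞} |v|Θ(v) = 1 and let β ∈ (1,5). Define s(v) = ∫_0^v Θ(u)^{-β} du, let s^{-1} be its inverse, ψ = s' ∘ s^{-1}, and φ(v) = s^{-1}(v)/ψ(v)². Then lim_{v→+∞} φ(v)/v^{(1-2β)/(β+1)} = (β+1)^{(1-2β)/(β+1)}. -/

import Mathlib

/-!
Since `|u| Θ(u) → 1`, the integrand of `s` satisfies `Θ(u)^{-β} ~ u^β`, and integrating this
equivalence gives `s(v) ~ v^{β+1}/(β+1)`. As `s⁻¹(w) → ∞`, evaluating at `v = s⁻¹(w)` yields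
`s⁻¹(w)^{β+1} ~ (β+1) w` and `ψ(w) ~ s⁻¹(w)^β`, so
`φ(w) ~ s⁻¹(w)^{1-2β} ~ ((β+1) w)^{(1-2β)/(β+1)}`.
-/

open MeasureTheory Filter Topology intervalIntegral Asymptotics

theorem Asymptotics.IsEquivalent.rpow_of_eventually_nonneg {α : Type*} {l : Filter α}
    {u v : α → ℝ} (h : u ~[l] v) (hv : ∀ᶠ x in l, 0 ≤ v x) (r : ℝ) :
    (fun x => u x ^ r) ~[l] fun x => v x ^ r := by
  -- `IsEquivalent.rpow` needs `0 ≤ v` everywhere, so pass through `max v 0`.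
  have hv' : v =ᶠ[l] fun x => max (v x) 0 := hv.mono fun x hx => (max_eq_left hx).symm
  exact ((h.congr_right hv').rpow (fun x => le_max_right (v x) 0)).congr_right
    (hv'.symm.fun_comp (· ^ r))

theorem Asymptotics.IsLittleO.intervalIntegral_atTop {E : Type*} [NormedAddCommGroup E]
    [NormedSpace ℝ E] {f : ℝ → E} {g : ℝ → ℝ} {a : ℝ}
    (hf : ∀ b, IntervalIntegrable f volume a b) (hg : ∀ b, IntervalIntegrable g volume a b)
    (h : f =o[atTop] g) (hg0 : ∀ᶠ x in atTop, 0 ≤ g x)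
    (hgi : Tendsto (fun v => ∫ x in a..v, g x) atTop atTop) :
    (fun v => ∫ x in a..v, f x) =o[atTop] fun v => ∫ x in a..v, g x := by
  -- Beyond `N` the tail is at most `ε/2 ∫ g`; the head up to `N` is a constant,
  -- negligible as `∫ g → ∞`.
  refine isLittleO_iff.2 fun ε hε => ?_
  obtain ⟨N, hN⟩ : ∃ N, ∀ x, N ≤ x → ‖f x‖ ≤ ε / 2 * g x := by
    refine eventually_atTop.1 ?_
    filter_upwards [isLittleO_iff.1 h (half_pos hε), hg0] with x hfx hgx
    rwa [Real.norm_of_nonneg hgx] at hfx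
  set C := ‖∫ x in a..N, f x‖ + ε / 2 * |∫ x in a..N, g x| with hC_def
  have hC : (fun _ => C) =o[atTop] fun v => ∫ x in a..v, g x :=
    isLittleO_const_left.2 <| Or.inr <| tendsto_norm_atTop_atTop.comp hgi
  filter_upwards [isLittleO_iff.1 hC (half_pos hε), eventually_ge_atTop N,
    hgi.eventually_ge_atTop 0] with v hCv hNv hgv
  have htail : ‖∫ x in N..v, f x‖ ≤ ε / 2 * ((∫ x in a..v, g x) - ∫ x in a..N, g x) := by
    rw [integral_interval_sub_left (hg v) (hg N), ← intervalIntegral.integral_const_mul]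
    exact norm_integral_le_of_norm_le hNv (ae_of_all _ fun x hx => hN x hx.1.le)
      (((hg N).symm.trans (hg v)).const_mul _)
  rw [Real.norm_of_nonneg hgv] at hCv ⊢
  rw [Real.norm_of_nonneg (by positivity)] at hCv
  calc ‖∫ x in a..v, f x‖ = ‖(∫ x in a..N, f x) + ∫ x in N..v, f x‖ := by
        rw [integral_add_adjacent_intervals (hf N) ((hf N).symm.trans (hf v))]
    _ ≤ ‖∫ x in a..N, f x‖ + ‖∫ x in N..v, f x‖ := norm_add_le _ _
    _ ≤ C + ε / 2 * ∫ x in a..v, g x := by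
        have := mul_le_mul_of_nonneg_left (neg_le_abs (∫ x in a..N, g x)) (half_pos hε).le
        linarith
    _ ≤ ε * ∫ x in a..v, g x := by linarith

theorem Asymptotics.IsEquivalent.intervalIntegral_atTop {f g : ℝ → ℝ} {a : ℝ}
    (hf : ∀ b, IntervalIntegrable f volume a b) (hg : ∀ b, IntervalIntegrable g volume a b)
    (h : f ~[atTop] g) (hg0 : ∀ᶠ x in atTop, 0 ≤ g x)
    (hgi : Tendsto (fun v => ∫ x in a..v, g x) atTop atTop) :
    (fun v => ∫ x in a..v, f x) ~[atTop] fun v => ∫ x in a..v, g x := by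
  refine IsLittleO.isEquivalent ?_
  refine (h.isLittleO.intervalIntegral_atTop (fun b => (hf b).sub (hg b)) hg hg0 hgi).congr_left
    fun v => ?_
  simp only [Pi.sub_apply, integral_sub (hf v) (hg v)]

theorem isEquivalent_integral_of_isEquivalent_rpow {f : ℝ → ℝ} {β : ℝ} (hβ : -1 < β)
    (hf : ∀ b, IntervalIntegrable f volume 0 b) (h : f ~[atTop] fun u => u ^ β) :
    (fun v => ∫ u in (0 : ℝ)..v, f u) ~[atTop] fun v => v ^ (β + 1) / (β + 1) := by
  have hβ1 : 0 < β + 1 := by linarith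
  have hintegral (v : ℝ) : ∫ u in (0 : ℝ)..v, u ^ β = v ^ (β + 1) / (β + 1) := by
    rw [integral_rpow (Or.inl hβ), Real.zero_rpow hβ1.ne', sub_zero]
  simp only [← hintegral]
  refine h.intervalIntegral_atTop hf (fun b => intervalIntegrable_rpow' hβ) ?_ ?_
  · filter_upwards [eventually_ge_atTop 0] with u hu using Real.rpow_nonneg hu β
  · simpa only [hintegral] using (tendsto_rpow_atTop hβ1).atTop_div_const hβ1

theorem monotone_integral_of_nonneg {f : ℝ → ℝ} (a : ℝ)
    (hf : ∀ b, IntervalIntegrable f volume a b) (h0 : 0 ≤ f) :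
    Monotone fun v => ∫ x in a..v, f x := fun b c hbc => by
  rw [← sub_nonneg, integral_interval_sub_left (hf c) (hf b)]
  exact integral_nonneg hbc fun x _ => h0 x

theorem Monotone.tendsto_atTop_of_rightInverse {α β : Type*} [LinearOrder α] [Preorder β]
    [NoMaxOrder β] {s : α → β} {t : β → α} (hs : Monotone s) (hst : Function.RightInverse t s) :
    Tendsto t atTop atTop :=
  tendsto_atTop.2 fun A => by
    filter_upwards [eventually_gt_atTop (s A)] with w hw
    by_contra! hlt
    exact (hst w ▸ hs hlt.le).not_gt hw

theorem isEquivalent_rpow_neg_of_tendsto_abs_mul {Θ : ℝ → ℝ} (hΘpos : ∀ v, 0 < Θ v)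
    (hΘ : Tendsto (fun v => |v| * Θ v) atTop (𝓝 1)) (β : ℝ) :
    (fun u => Θ u ^ (-β)) ~[atTop] fun u => u ^ β := by
  refine isEquivalent_of_tendsto_one ?_
  have h := ((Real.continuousAt_rpow_const 1 (-β) (Or.inl one_ne_zero)).tendsto.comp hΘ)
  rw [Real.one_rpow] at h
  refine h.congr' ?_
  filter_upwards [eventually_gt_atTop 0] with u hu
  rw [Function.comp_apply, abs_of_pos hu, Real.mul_rpow hu.le (hΘpos u).le, Real.rpow_neg hu.le,
    Pi.div_apply, inv_mul_eq_div]

theorem isEquivalent_rpow_of_rightInverse {s t : ℝ → ℝ} {p : ℝ} (hp : 0 < p)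
    (hs : s ~[atTop] fun v => v ^ p / p) (hst : Function.RightInverse t s)
    (ht : Tendsto t atTop atTop) :
    (fun w => t w ^ p) ~[atTop] fun w => p * w := by
  have h : (fun w => w) ~[atTop] fun w => t w ^ p / p := by
    simpa only [Function.comp_def, hst _] using hs.comp_tendsto ht
  refine (IsEquivalent.refl (u := fun _ => p)).mul h |>.symm.congr_left ?_ |>.congr_right ?_
  · exact Eventually.of_forall fun w => by simp only [Pi.mul_apply]; field_simp
  · exact Eventually.of_forall fun w => rfl

theorem tendsto_div_rpow_of_isEquivalent {f : ℝ → ℝ} {c e : ℝ}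
    (h : f ~[atTop] fun w => c * w ^ e) :
    Tendsto (fun w => f w / w ^ e) atTop (𝓝 c) := by
  refine IsEquivalent.tendsto_const <|
    (h.div (IsEquivalent.refl (u := fun w => w ^ e))).congr_right ?_
  filter_upwards [eventually_gt_atTop 0] with w hw
  simp only [Pi.div_apply, Function.const_apply]
  field_simp [(Real.rpow_pos_of_pos hw e).ne']

theorem stmt8_general (β : ℝ) (hβ1 : 1 < β)
    (Θ : ℝ → ℝ) (hΘpos : ∀ v, 0 < Θ v) (hΘC1 : ContDiff ℝ 1 Θ)
    (hΘtop : Tendsto (fun v : ℝ => |v| * Θ v) atTop (𝓝 1))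
    (s : ℝ → ℝ) (hs : ∀ v, s v = ∫ u in (0 : ℝ)..v, (Θ u) ^ (-β))
    (sInv : ℝ → ℝ) (hright : ∀ w, s (sInv w) = w) :
    let ψ : ℝ → ℝ := fun w => (Θ (sInv w)) ^ (-β)
    let φ : ℝ → ℝ := fun w => sInv w / (ψ w) ^ 2
    Tendsto (fun v : ℝ => φ v / v ^ ((1 - 2 * β) / (β + 1))) atTop
      (𝓝 ((β + 1) ^ ((1 - 2 * β) / (β + 1)))) := by
  intro ψ φ
  have hβ : 0 < β + 1 := by linarith
  have hΘβ := isEquivalent_rpow_neg_of_tendsto_abs_mul hΘpos hΘtop β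
  have hintegrable (b : ℝ) : IntervalIntegrable (fun u => Θ u ^ (-β)) volume 0 b :=
    (hΘC1.continuous.rpow_const fun x => Or.inl (hΘpos x).ne').intervalIntegrable 0 b
  rw [show s = _ from funext hs] at hright
  have hsInv : Tendsto sInv atTop atTop := Monotone.tendsto_atTop_of_rightInverse
    (monotone_integral_of_nonneg 0 hintegrable fun u => (Real.rpow_pos_of_pos (hΘpos u) _).le)
    hright
  have hpow : (fun w => sInv w ^ (β + 1)) ~[atTop] fun w => (β + 1) * w :=
    isEquivalent_rpow_of_rightInverse hβ
      (isEquivalent_integral_of_isEquivalent_rpow (by linarith) hintegrable hΘβ) hright hsInv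
  have hφ : φ ~[atTop] fun w => (sInv w ^ (β + 1)) ^ ((1 - 2 * β) / (β + 1)) := by
    refine (IsEquivalent.refl.div ((hΘβ.comp_tendsto hsInv).pow 2)).congr_right ?_
    filter_upwards [hsInv.eventually_gt_atTop 0] with w hw
    simp only [Pi.div_apply, Pi.pow_apply, Function.comp_apply]
    rw [← Real.rpow_mul hw.le, mul_div_cancel₀ _ hβ.ne', ← Real.rpow_natCast,
      ← Real.rpow_mul hw.le, show 1 - 2 * β = 1 - β * (2 : ℕ) by push_cast; ring,
      Real.rpow_sub hw, Real.rpow_one]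
  refine tendsto_div_rpow_of_isEquivalent (hφ.trans ?_)
  refine (hpow.rpow_of_eventually_nonneg ?_ _).congr_right ?_
  · filter_upwards [eventually_ge_atTop 0] with w hw using by positivity
  · filter_upwards [eventually_ge_atTop 0] with w hw using Real.mul_rpow hβ.le hw

/-- Asymptotics of `φ(v) = s⁻¹(v)/ψ(v)²` where `ψ = s' ∘ s⁻¹`:
`φ(v)/v^{(1-2β)/(β+1)} → (β+1)^{(1-2β)/(β+1)}` as `v → +∞`. -/
theorem stmt8 (β : ℝ) (hβ1 : 1 < β) (hβ5 : β < 5)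
    (Θ : ℝ → ℝ) (hΘpos : ∀ v, 0 < Θ v) (hΘC1 : ContDiff ℝ 1 Θ)
    (hΘeven : ∀ v, Θ (-v) = Θ v)
    (hΘtop : Tendsto (fun v : ℝ => |v| * Θ v) atTop (𝓝 1))
    (hΘbot : Tendsto (fun v : ℝ => |v| * Θ v) atBot (𝓝 1))
    (s : ℝ → ℝ) (hs : ∀ v, s v = ∫ u in (0 : ℝ)..v, (Θ u) ^ (-β))
    (sInv : ℝ → ℝ) (hleft : ∀ v, sInv (s v) = v) (hright : ∀ w, s (sInv w) = w) :
    let ψ : ℝ → ℝ := fun w => (Θ (sInv w)) ^ (-β)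
    let φ : ℝ → ℝ := fun w => sInv w / (ψ w) ^ 2
    Tendsto (fun v : ℝ => φ v / v ^ ((1 - 2 * β) / (β + 1))) atTop
      (𝓝 ((β + 1) ^ ((1 - 2 * β) / (β + 1)))) :=
  stmt8_general β hβ1 Θ hΘpos hΘC1 hΘtop s hs sInv hright
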